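/- If the preferences are symmetric and {p,q} is a blocking pair for an arrangement π, then the (p,q)-swap arrangement π' satisfies sw(π') > sw(π). -/
import Mathlib


open scoped Classical

noncomputable section

namespace SeatArrangement

variable {P V : Type*}

/-- The utility of agent `p` under arrangement `π`:
the sum, over the seat-graph neighbors `v` of `π p`, of `p`'s preference for the agent seated
at `v`. -/
def utility [Fintype V] (G : SimpleGraph V) (f : P → P → ℝ) (π : P ≃ V) (p : P) : ℝ :=
  ∑ v : V, if G.Adj (π p) v then f p (π.symm v) else 0

/-- The social welfare of an arrangement: the sum of the utilities of all agents. -/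
def sw [Fintype P] [Fintype V] (G : SimpleGraph V) (f : P → P → ℝ) (π : P ≃ V) : ℝ :=
  ∑ p : P, utility G f π p

/-- The `(p,q)`-swap arrangement of `π`. -/
def swapArr (π : P ≃ V) (p q : P) : P ≃ V := (Equiv.swap p q).trans π

/-- `{p, q}` is a blocking pair for `π`: both agents strictly improve by swapping seats. -/
def blocking [Fintype V] (G : SimpleGraph V) (f : P → P → ℝ) (π : P ≃ V) (p q : P) : Prop :=
  p ≠ q ∧ utility G f π p < utility G f (swapArr π p q) p
        ∧ utility G f π q < utility G f (swapArr π p q) q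

/-- An arrangement is stable if it has no blocking pair. -/
def stable [Fintype V] (G : SimpleGraph V) (f : P → P → ℝ) (π : P ≃ V) : Prop :=
  ∀ p q : P, ¬ blocking G f π p q

/-- An arrangement is envy-free if no agent would strictly improve by taking
another agent's seat (via a swap). -/
def envyFree [Fintype V] (G : SimpleGraph V) (f : P → P → ℝ) (π : P ≃ V) : Prop :=
  ∀ p q : P, p ≠ q → utility G f (swapArr π p q) p ≤ utility G f π p

/-- The least utility of an agent under `π` (for a finite nonempty set of agents, the
infimum of the range of utilities is the minimum utility). -/
def minUtil [Fintype V] (G : SimpleGraph V) (f : P → P → ℝ) (π : P ≃ V) : ℝ :=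
  sInf (Set.range (utility G f π))

/-- A maximin arrangement maximizes the least utility of an agent. -/
def maximin [Fintype V] (G : SimpleGraph V) (f : P → P → ℝ) (πf : P ≃ V) : Prop :=
  ∀ π : P ≃ V, minUtil G f π ≤ minUtil G f πf

/-- A maximum arrangement maximizes the social welfare. -/
def maximum [Fintype P] [Fintype V] (G : SimpleGraph V) (f : P → P → ℝ) (πm : P ≃ V) : Prop :=
  ∀ π : P ≃ V, sw G f π ≤ sw G f πm

end SeatArrangement

open SeatArrangement

/-- Under symmetric preferences, swapping a blocking pair strictly increases
the social welfare. -/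
theorem blocking_swap_increases_sw {P V : Type*} [Fintype P] [Fintype V]
    (G : SimpleGraph V) (f : P → P → ℝ)
    (hsym : ∀ p q : P, p ≠ q → f p q = f q p)
    (π : P ≃ V) (p q : P)
    (hblock : blocking G f π p q) :
    sw G f π < sw G f (swapArr π p q) := by
  obtain ⟨hpq, hp, hq⟩ := hblock
  set σ : Equiv.Perm P := Equiv.swap p q with hσ
  -- utility in agent-indexed form
  have hutil : ∀ (ρ : P ≃ V) (r : P),
      utility G f ρ r = ∑ b : P, if G.Adj (ρ r) (ρ b) then f r b else 0 := by
    intro ρ r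
    unfold utility
    rw [← Equiv.sum_comp ρ (fun v => if G.Adj (ρ r) v then f r (ρ.symm v) else 0)]
    simp
  have hσσ : ∀ a, σ (σ a) = a := fun a => Equiv.swap_apply_self p q a
  have hσp : σ p = q := Equiv.swap_apply_left p q
  have hσq : σ q = p := Equiv.swap_apply_right p q
  have hutil' : ∀ r : P,
      utility G f (swapArr π p q) r
        = ∑ b : P, if G.Adj (π (σ r)) (π (σ b)) then f r b else 0 := by
    intro r; rw [hutil]; rfl
  -- the difference matrix
  set M : P → P → ℝ := fun a b =>
    if G.Adj (π a) (π b) then f (σ a) (σ b) - f a b else 0 with hM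
  have hsw1 : sw G f π = ∑ a : P, ∑ b : P, (if G.Adj (π a) (π b) then f a b else 0) := by
    unfold sw; exact Finset.sum_congr rfl fun a _ => hutil π a
  have hsw2 : sw G f (swapArr π p q)
      = ∑ a : P, ∑ b : P, (if G.Adj (π a) (π b) then f (σ a) (σ b) else 0) := by
    unfold sw
    rw [Finset.sum_congr rfl fun a (_ : a ∈ Finset.univ) => hutil' a]
    refine Fintype.sum_equiv σ _ _ fun a => ?_
    refine Fintype.sum_equiv σ _ _ fun b => ?_
    simp [hσσ]
  have hdiff : sw G f (swapArr π p q) - sw G f π = ∑ a : P, ∑ b : P, M a b := by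
    rw [hsw1, hsw2, ← Finset.sum_sub_distrib]
    refine Finset.sum_congr rfl fun a _ => ?_
    rw [← Finset.sum_sub_distrib]
    refine Finset.sum_congr rfl fun b _ => ?_
    simp only [hM]
    split_ifs <;> ring
  -- corner values vanish
  have hMpp : M p p = 0 := by simp [hM]
  have hMqq : M q q = 0 := by simp [hM]
  have hMpq : M p q = 0 := by
    simp only [hM, hσp, hσq]
    split_ifs with h
    · rw [hsym q p (Ne.symm hpq)]; ring
    · rfl
  have hMqp : M q p = 0 := by
    simp only [hM, hσp, hσq]
    split_ifs with h
    · rw [hsym p q hpq]; ring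
    · rfl
  have hMout : ∀ a b, a ≠ p → a ≠ q → b ≠ p → b ≠ q → M a b = 0 := by
    intro a b hap haq hbp hbq
    simp only [hM, hσ, Equiv.swap_apply_of_ne_of_ne hap haq,
      Equiv.swap_apply_of_ne_of_ne hbp hbq]
    split_ifs <;> ring
  -- pointwise decomposition
  have hpoint : ∀ a b, M a b =
      (if a = p then M p b else 0) + (if a = q then M q b else 0)
      + (if b = p then M a p else 0) + (if b = q then M a q else 0) := by
    intro a b
    by_cases hap : a = p <;> by_cases haq : a = q <;>
      by_cases hbp : b = p <;> by_cases hbq : b = q <;>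
      subst_vars <;>
      simp_all [hMpp, hMqq, hMpq, hMqp]
  have hsum : ∑ a : P, ∑ b : P, M a b
      = (∑ b : P, M p b) + (∑ b : P, M q b) + (∑ a : P, M a p) + (∑ a : P, M a q) := by
    calc ∑ a : P, ∑ b : P, M a b
        = ∑ a : P, ∑ b : P,
            ((if a = p then M p b else 0) + (if a = q then M q b else 0)
              + (if b = p then M a p else 0) + (if b = q then M a q else 0)) := by
          exact Finset.sum_congr rfl fun a _ => Finset.sum_congr rfl fun b _ => hpoint a b
      _ = (∑ b : P, M p b) + (∑ b : P, M q b) + (∑ a : P, M a p) + (∑ a : P, M a q) := by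
          simp [Finset.sum_add_distrib, Finset.sum_ite_eq', Finset.sum_comm (γ := P)]
  -- columns equal rows
  have hcolp : ∑ a : P, M a p = ∑ b : P, M p b := by
    refine Finset.sum_congr rfl fun a _ => ?_
    by_cases hap : a = p
    · subst hap; rfl
    · simp only [hM, hσp]
      rw [G.adj_comm (π a) (π p)]
      have h1 : f a p = f p a := hsym a p hap
      have h2 : f (σ a) q = f q (σ a) := by
        refine hsym (σ a) q ?_
        intro h
        exact hap (by rw [← hσq, ← h, hσσ])
      rw [h1, h2]
  have hcolq : ∑ a : P, M a q = ∑ b : P, M q b := by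
    refine Finset.sum_congr rfl fun a _ => ?_
    by_cases haq : a = q
    · subst haq; rfl
    · simp only [hM, hσq]
      rw [G.adj_comm (π a) (π q)]
      have h1 : f a q = f q a := hsym a q haq
      have h2 : f (σ a) p = f p (σ a) := by
        refine hsym (σ a) p ?_
        intro h
        exact haq (by rw [← hσp, ← h, hσσ])
      rw [h1, h2]
  -- row identities
  have hrowp : ∑ b : P, M p b
      = utility G f (swapArr π p q) q - utility G f π p := by
    have e1 : ∑ b : P, M p b
        = (∑ b : P, if G.Adj (π p) (π b) then f q (σ b) else 0)
          - ∑ b : P, (if G.Adj (π p) (π b) then f p b else 0) := by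
      rw [← Finset.sum_sub_distrib]
      refine Finset.sum_congr rfl fun b _ => ?_
      simp only [hM, hσp]
      split_ifs <;> ring
    rw [e1, hutil π p, hutil' q, hσq]
    congr 1
    refine Fintype.sum_equiv σ _ _ fun b => ?_
    simp [hσσ]
  have hrowq : ∑ b : P, M q b
      = utility G f (swapArr π p q) p - utility G f π q := by
    have e1 : ∑ b : P, M q b
        = (∑ b : P, if G.Adj (π q) (π b) then f p (σ b) else 0)
          - ∑ b : P, (if G.Adj (π q) (π b) then f q b else 0) := by
      rw [← Finset.sum_sub_distrib]
      refine Finset.sum_congr rfl fun b _ => ?_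
      simp only [hM, hσq]
      split_ifs <;> ring
    rw [e1, hutil π q, hutil' p, hσp]
    congr 1
    refine Fintype.sum_equiv σ _ _ fun b => ?_
    simp [hσσ]
  have key : sw G f (swapArr π p q) - sw G f π
      = 2 * ((utility G f (swapArr π p q) p - utility G f π p)
            + (utility G f (swapArr π p q) q - utility G f π q)) := by
    rw [hdiff, hsum, hcolp, hcolq, hrowp, hrowq]; ring
  linarith
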